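/- arXiv:2408.03008 — 5 statements merged into one kernel-verified Lean document; each statement's English description precedes it below -/
import Mathlib

section
/- For every string S and character c: if w·c is a nonempty repeating suffix of S·c, then w is a repeating suffix of S. Consequently, |lrs(S·c)| ≤ |lrs(S)| + 1. -/
open List

variable {α : Type*}

/-- `w` occurs in `S` starting at (1-indexed) position `a`. -/
def Occ (S w : List α) (a : ℕ) : Prop :=
  1 ≤ a ∧ a + w.length ≤ S.length + 1 ∧ (S.drop (a - 1)).take w.length = w

/-- `w` is a repeating suffix of `S`: a suffix of `S` that is a substring of `S[1..|S|-1]`. -/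
def RepSuffix (S w : List α) : Prop := w <:+ S ∧ w <:+: S.dropLast

/-- `w` is a repeating prefix of `S`: a prefix of `S` that is a substring of `S[2..|S|]`. -/
def RepPrefix (S w : List α) : Prop := w <+: S ∧ w <:+: S.tail

/-- Length of the longest repeating suffix of `S`. -/
def lrsLen [DecidableEq α] (S : List α) : ℕ :=
  Nat.findGreatest (fun l => S.drop (S.length - l) <:+: S.dropLast) S.length

/-- The longest repeating suffix of `S` (empty if none is nonempty). -/
def lrs [DecidableEq α] (S : List α) : List α := S.drop (S.length - lrsLen S)

/-- Length of the longest repeating prefix of `S`. -/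
def lrpLen [DecidableEq α] (S : List α) : ℕ :=
  Nat.findGreatest (fun l => S.take l <:+: S.tail) S.length

/-- The longest repeating prefix of `S` (empty if none is nonempty). -/
def lrp [DecidableEq α] (S : List α) : List α := S.take (lrpLen S)

/-- `p ≥ 1` is a period of `w`: `w[x] = w[x+p]` for all `1 ≤ x ≤ |w| - p` (1-indexed). -/
def IsPeriod (w : List α) (p : ℕ) : Prop :=
  1 ≤ p ∧ ∀ x, 1 ≤ x → x + p ≤ w.length → w[x - 1]? = w[x + p - 1]?

/-- `b` is a border of `w`: a proper prefix and proper suffix of `w`. -/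
def IsBorder (w b : List α) : Prop := b <+: w ∧ b <:+ w ∧ b.length < w.length

/-- `b` is the longest border of `w`. -/
def IsLongestBorder (w b : List α) : Prop :=
  IsBorder w b ∧ ∀ b', IsBorder w b' → b'.length ≤ b.length

/-- `w` is closed: `|w| ≤ 1`, or the longest border of `w` occurs exactly twice in `w`,
namely only as a prefix and as a suffix. -/
def ClosedWord (w : List α) : Prop :=
  w.length ≤ 1 ∨
    ∃ b, IsLongestBorder w b ∧ ∀ a, Occ w b a → a = 1 ∨ a = w.length - b.length + 1

/-- If `w·c` is a (nonempty) repeating suffix of `S·c`, then `w` is a repeating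
suffix of `S`; consequently `|lrs (S·c)| ≤ |lrs S| + 1`. -/
theorem lrs_append_le [DecidableEq α] (S : List α) (c : α) :
    (∀ w : List α, RepSuffix (S ++ [c]) (w ++ [c]) → RepSuffix S w) ∧
    (lrs (S ++ [c])).length ≤ (lrs S).length + 1 := by
  have key : ∀ w : List α, RepSuffix (S ++ [c]) (w ++ [c]) → RepSuffix S w := by
    rintro w ⟨hsuf, hinf⟩
    rw [show (S ++ [c]).dropLast = S by simp [List.dropLast_concat]] at hinf
    constructor
    · obtain ⟨t, ht⟩ := hsuf
      refine ⟨t, ?_⟩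
      have h2 : (t ++ w) ++ [c] = S ++ [c] := by
        rw [← ht]; simp
      exact List.append_cancel_right h2
    · obtain ⟨u, v, huv⟩ := hinf
      rcases v.eq_nil_or_concat with rfl | ⟨v', a, rfl⟩
      · have : S = (u ++ w) ++ [c] := by rw [← huv]; simp
        rw [this, List.dropLast_concat]
        exact ⟨u, [], by simp⟩
      · have : S = (u ++ (w ++ [c]) ++ v') ++ [a] := by rw [← huv]; simp
        rw [this, List.dropLast_concat]
        exact ⟨u, [c] ++ v', by simp⟩
  refine ⟨key, ?_⟩
  have hlen : ∀ T : List α, (lrs T).length = lrsLen T := by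
    intro T
    have hb : lrsLen T ≤ T.length := Nat.findGreatest_le _
    simp [lrs, List.length_drop]; omega
  rw [hlen, hlen]
  set L := lrsLen (S ++ [c]) with hL
  rcases Nat.eq_zero_or_pos L with h0 | hpos
  · omega
  · have hspec : (S ++ [c]).drop ((S ++ [c]).length - L) <:+: (S ++ [c]).dropLast :=
      (Nat.findGreatest_eq_iff.1 hL.symm).2.1 (by omega)
    have hLle : L ≤ (S ++ [c]).length := Nat.findGreatest_le _
    simp only [List.length_append, List.length_singleton] at hLle
    set w := S.drop (S.length - (L - 1)) with hw
    have hdrop : (S ++ [c]).drop ((S ++ [c]).length - L) = w ++ [c] := by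
      rw [List.drop_append]
      simp only [List.length_append, List.length_singleton]
      congr 1
      · congr 1; omega
      · have : S.length + 1 - L - S.length = 0 := by omega
        rw [this]; simp
    have hrep : RepSuffix (S ++ [c]) (w ++ [c]) := by
      constructor
      · rw [← hdrop]; exact List.drop_suffix _ _
      · rw [← hdrop]
        simpa [List.dropLast_concat] using hspec
    obtain ⟨hsfx, hinf⟩ := key w hrep
    have : L - 1 ≤ lrsLen S := by
      apply Nat.le_findGreatest (by omega)
      simpa [hw] using hinf
    omega
end

section
/- (Correctness of online LZ factor detection.) Let S be a string of length n and let 1 ≤ i ≤ n be such that the character S[i] occurs in S[1..i−1]. Suppose ℓ* is the smallest integer ℓ ≥ 2 such that i + ℓ − 1 ≤ n and |lrs(S[1..i+ℓ−1])| < ℓ, and assume such ℓ* exists. Then S[i..i+ℓ*−2] has an occurrence in S starting at some position strictly less than i, and for every m with i + ℓ* − 1 ≤ m ≤ n, the string S[i..m] has no occurrence in S starting at a position strictly less than i. In other words, S[i..i+ℓ*−2] is the longest prefix of S[i..n] that occurs in S starting before position i. -/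
open List

variable {α : Type*}

/-!
The suffix of length `ℓ` of `S[1..i+ℓ-1]` is `S[i..i+ℓ-1]`, and it is a factor of
`S[1..i+ℓ-2]` exactly when it occurs in `S` starting before `i`. Since a suffix of a repeating
suffix is again repeating, `|lrs(S[1..i+ℓ-1])| < ℓ` says precisely that `S[i..i+ℓ-1]` has no
occurrence starting before `i`. Having such an occurrence passes to prefixes, so it holds up to
some length and fails from there on; the hypothesis on `S[i]` and the minimality of `ℓ*` put
the switch between `ℓ* - 1` and `ℓ*`.
-/

theorem List.infix_iff_exists_take_drop {w L : List α} :
    w <:+: L ↔ ∃ k, k + w.length ≤ L.length ∧ (L.drop k).take w.length = w := by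
  constructor
  · rintro ⟨s, t, rfl⟩
    exact ⟨s.length, by simp, by rw [append_assoc, drop_left, take_left]⟩
  · rintro ⟨k, -, hk⟩
    exact hk ▸ (take_prefix _ _).isInfix.trans (drop_suffix k L).isInfix

theorem List.take_drop_take_of_add_le (L : List α) {j k n : ℕ} (h : k + n ≤ j) :
    ((L.take j).drop k).take n = (L.drop k).take n := by
  rw [drop_take, take_take, Nat.min_eq_left (by omega)]

theorem Occ.of_prefix {S w v : List α} {a : ℕ} (h : Occ S w a) (hv : v <+: w) : Occ S v a := by
  obtain ⟨ha, hlen, hw⟩ := h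
  have hvw := hv.length_le
  refine ⟨ha, by omega, ?_⟩
  calc (S.drop (a - 1)).take v.length = w.take v.length := by
        rw [← hw, take_take, Nat.min_eq_left hvw]
    _ = v := (prefix_iff_eq_take.1 hv).symm

theorem exists_occ_lt_iff_infix_take {S w : List α} (hw : w ≠ []) (i : ℕ) :
    (∃ a, a < i ∧ Occ S w a) ↔ w <:+: S.take (i + w.length - 2) := by
  have hn : 1 ≤ w.length := length_pos_iff.2 hw
  rw [infix_iff_exists_take_drop, length_take]
  constructor
  · rintro ⟨a, hai, ha, hlen, hocc⟩
    exact ⟨a - 1, by omega, by rw [take_drop_take_of_add_le _ (by omega), hocc]⟩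
  · rintro ⟨k, hk, hocc⟩
    rw [take_drop_take_of_add_le _ (by omega)] at hocc
    exact ⟨k + 1, by omega, by omega, by omega, hocc⟩

theorem lrsLen_le_length [DecidableEq α] (T : List α) : lrsLen T ≤ T.length :=
  Nat.findGreatest_le _

theorem le_lrsLen_iff [DecidableEq α] {T : List α} {k : ℕ} (hk : k ≤ T.length) :
    k ≤ lrsLen T ↔ T.drop (T.length - k) <:+: T.dropLast := by
  refine ⟨fun h => ?_, fun h => Nat.le_findGreatest hk h⟩
  rcases Nat.eq_zero_or_pos (lrsLen T) with h0 | hpos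
  · rw [show k = 0 by omega, Nat.sub_zero, drop_length]
    exact nil_infix
  · have hlrs : T.drop (T.length - lrsLen T) <:+: T.dropLast :=
      Nat.findGreatest_of_ne_zero rfl hpos.ne'
    have hsuf : T.drop (T.length - k) = (T.drop (T.length - lrsLen T)).drop (lrsLen T - k) := by
      rw [drop_drop]
      have := lrsLen_le_length T
      congr 1
      omega
    exact hsuf ▸ (drop_suffix _ _).isInfix.trans hlrs

theorem lrs_length [DecidableEq α] (T : List α) : (lrs T).length = lrsLen T := by
  have := lrsLen_le_length T
  rw [lrs, length_drop]
  omega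

theorem lrs_take_length_lt_iff [DecidableEq α] {S : List α} {i l : ℕ} (hi : 1 ≤ i)
    (hl : 1 ≤ l) (hS : i + l - 1 ≤ S.length) :
    (lrs (S.take (i + l - 1))).length < l ↔
      ¬ ∃ a, a < i ∧ Occ S ((S.drop (i - 1)).take l) a := by
  have hlen : (S.take (i + l - 1)).length = i + l - 1 := by rw [length_take]; omega
  have hfactor : ((S.drop (i - 1)).take l).length = l := by rw [length_take, length_drop]; omega
  have hsuffix : (S.take (i + l - 1)).drop (i + l - 1 - l) = (S.drop (i - 1)).take l := by
    rw [drop_take, show i + l - 1 - l = i - 1 by omega, show i + l - 1 - (i - 1) = l by omega]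
  have hprefix : (S.take (i + l - 1)).dropLast = S.take (i + l - 2) := by
    rw [dropLast_eq_take, hlen, take_take, Nat.min_eq_left (by omega),
      show i + l - 1 - 1 = i + l - 2 by omega]
  rw [lrs_length, ← not_le, le_lrsLen_iff (by omega), hlen, hsuffix, hprefix,
    exists_occ_lt_iff_infix_take (ne_nil_of_length_pos (by omega)), hfactor]

theorem online_LZ_factor_detection_general [DecidableEq α] (S : List α) (i l : ℕ)
    (hi1 : 1 ≤ i)
    (hchar : (S.drop (i - 1)).take 1 <:+: S.take (i - 1))
    (hl2 : 2 ≤ l) (hln : i + l - 1 ≤ S.length)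
    (hlt : (lrs (S.take (i + l - 1))).length < l)
    (hmin : ∀ l', 2 ≤ l' → i + l' - 1 ≤ S.length →
      (lrs (S.take (i + l' - 1))).length < l' → l ≤ l') :
    (∃ a, a < i ∧ Occ S ((S.drop (i - 1)).take (l - 1)) a) ∧
    (∀ m, i + l - 1 ≤ m → m ≤ S.length →
      ¬ ∃ a, a < i ∧ Occ S ((S.drop (i - 1)).take (m - i + 1)) a) := by
  set OccursBefore : ℕ → Prop := fun k => ∃ a, a < i ∧ Occ S ((S.drop (i - 1)).take k) a
  have hmono {k k'} (hk : k ≤ k') : OccursBefore k' → OccursBefore k :=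
    fun ⟨a, ha, hocc⟩ => ⟨a, ha, hocc.of_prefix (take_prefix_take_left hk)⟩
  have hfirst : ((S.drop (i - 1)).take 1).length = 1 := by rw [length_take, length_drop]; omega
  have hone : OccursBefore 1 := by
    refine (exists_occ_lt_iff_infix_take (ne_nil_of_length_pos (by omega)) i).2 ?_
    rwa [hfirst, show i + 1 - 2 = i - 1 by omega]
  have hl : ¬ OccursBefore l := (lrs_take_length_lt_iff hi1 (by omega) hln).1 hlt
  refine ⟨?_, fun m hm _ hocc => hl (hmono (by omega) hocc)⟩
  rcases (by omega : l = 2 ∨ 3 ≤ l) with rfl | hl3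
  · exact hone
  · by_contra hnot
    have hshort := (lrs_take_length_lt_iff hi1 (by omega) (by omega)).2 hnot
    have := hmin (l - 1) (by omega) (by omega) hshort
    omega

/-- Correctness of online LZ factor detection: if `S[i]` occurs in `S[1..i-1]`
and `ℓ*` is the smallest `ℓ ≥ 2` with `i + ℓ - 1 ≤ n` and `|lrs (S[1..i+ℓ-1])| < ℓ`, then
`S[i..i+ℓ*-2]` occurs in `S` starting before `i`, and for every `m` with `i+ℓ*-1 ≤ m ≤ n`,
`S[i..m]` has no occurrence in `S` starting before `i`. -/
theorem online_LZ_factor_detection [DecidableEq α] (S : List α) (i l : ℕ)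
    (hi1 : 1 ≤ i) (hi2 : i ≤ S.length)
    (hchar : (S.drop (i - 1)).take 1 <:+: S.take (i - 1))
    (hl2 : 2 ≤ l) (hln : i + l - 1 ≤ S.length)
    (hlt : (lrs (S.take (i + l - 1))).length < l)
    (hmin : ∀ l', 2 ≤ l' → i + l' - 1 ≤ S.length →
      (lrs (S.take (i + l' - 1))).length < l' → l ≤ l') :
    (∃ a, a < i ∧ Occ S ((S.drop (i - 1)).take (l - 1)) a) ∧
    (∀ m, i + l - 1 ≤ m → m ≤ S.length →
      ¬ ∃ a, a < i ∧ Occ S ((S.drop (i - 1)).take (m - i + 1)) a) :=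
  online_LZ_factor_detection_general S i l hi1 hchar hl2 hln hlt hmin
end

section
/- (Correctness of the sliding-window factor computation.) Let S be a string of length n, let d ≥ 1, and let i, m, p be positions with d < i, 1 ≤ p ≤ d, and i + 2d − 1 ≤ m < n. Suppose S[x−p] = S[x] for all x with i ≤ x ≤ m, and S[m+1] ≠ S[m+1−p]. Then: (a) S[i..m] occurs in S starting at position i − p, which lies in the window [i−d, i−1]; and (b) for every q with 1 ≤ q ≤ d, the string S[i..m+1] does not occur in S starting at position i − q. Hence S[i..m] is the longest prefix of S[i..n] having an occurrence in S starting at a position in [i−d, i−1]. -/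
open List

variable {α : Type*}

/-- Correctness of the sliding-window factor computation: with `d ≥ 1`,
`d < i`, `1 ≤ p ≤ d`, `i + 2d - 1 ≤ m < n`, if `S[x-p] = S[x]` for all `i ≤ x ≤ m` and
`S[m+1] ≠ S[m+1-p]`, then (a) `S[i..m]` occurs at `i - p ∈ [i-d, i-1]`; (b) for every
`1 ≤ q ≤ d`, `S[i..m+1]` does not occur at `i - q`; hence `S[i..m]` is the longest prefix
of `S[i..n]` occurring at a position in `[i-d, i-1]`. -/
theorem sliding_window_factor_correct (S : List α) (d i m p : ℕ)
    (hd : 1 ≤ d) (hdi : d < i) (hp1 : 1 ≤ p) (hpd : p ≤ d)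
    (him : i + 2 * d - 1 ≤ m) (hmn : m < S.length)
    (hcopy : ∀ x, i ≤ x → x ≤ m → S[x - p - 1]? = S[x - 1]?)
    (hmis : S[m]? ≠ S[m - p]?) :
    (Occ S ((S.drop (i - 1)).take (m - i + 1)) (i - p) ∧
      i - d ≤ i - p ∧ i - p ≤ i - 1) ∧
    (∀ q, 1 ≤ q → q ≤ d →
      ¬ Occ S ((S.drop (i - 1)).take (m - i + 2)) (i - q)) ∧
    (∀ m', m < m' → m' ≤ S.length → ∀ a, i - d ≤ a → a ≤ i - 1 →
      ¬ Occ S ((S.drop (i - 1)).take (m' - i + 1)) a) := by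

  have hext : ∀ a b l : ℕ, (∀ j, j < l → S[a+j]? = S[b+j]?) →
      (S.drop a).take l = (S.drop b).take l := by
    intro a b l h
    apply List.ext_getElem?
    intro j
    rw [getElem?_take, getElem?_take, getElem?_drop, getElem?_drop]
    by_cases hj : j < l
    · simp only [hj, if_true, h j hj]
    · simp only [hj, if_false]
  have hext' : ∀ a b l : ℕ, (S.drop a).take l = (S.drop b).take l →
      ∀ j, j < l → S[a+j]? = S[b+j]? := by
    intro a b l h j hj
    have := congrArg (fun t => t[j]?) h
    simpa only [getElem?_take, getElem?_drop, hj, if_true] using this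
  have hlen1 : ((S.drop (i - 1)).take (m - i + 1)).length = m - i + 1 := by
    simp only [List.length_take, List.length_drop]; omega
  have hlen2 : ((S.drop (i - 1)).take (m - i + 2)).length = m - i + 2 := by
    simp only [List.length_take, List.length_drop]; omega
  have hkey : ∀ q, 1 ≤ q → q ≤ d →
      ¬ ((S.drop (i - q - 1)).take (m - i + 2) = (S.drop (i - 1)).take (m - i + 2)) := by
    intro q hq1 hqd heq
    have hq : ∀ x, i ≤ x → x ≤ m + 1 → S[x - q - 1]? = S[x - 1]? := by
      intro x hx1 hx2
      have h := hext' _ _ _ heq (x - i) (by omega)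
      rw [show i - q - 1 + (x - i) = x - q - 1 from by omega,
          show i - 1 + (x - i) = x - 1 from by omega] at h
      exact h
    have e1 : S[m - q]? = S[m]? := by
      have h := hq (m + 1) (by omega) (by omega)
      rw [show m + 1 - q - 1 = m - q from by omega,
          show m + 1 - 1 = m from by omega] at h
      exact h
    have e2 : S[m - q - p]? = S[m - q]? := by
      have h := hcopy (m + 1 - q) (by omega) (by omega)
      rw [show m + 1 - q - p - 1 = m - q - p from by omega,
          show m + 1 - q - 1 = m - q from by omega] at h
      exact h
    have e3 : S[m - p - q]? = S[m - p]? := by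
      have h := hq (m + 1 - p) (by omega) (by omega)
      rw [show m + 1 - p - q - 1 = m - p - q from by omega,
          show m + 1 - p - 1 = m - p from by omega] at h
      exact h
    apply hmis
    rw [← e1, ← e2, show m - q - p = m - p - q from by omega, e3]
  refine ⟨⟨⟨by omega, ?_, ?_⟩, by omega, by omega⟩, ?_, ?_⟩
  · rw [hlen1]; omega
  · rw [hlen1]
    apply hext
    intro j hj
    have h := hcopy (i + j) (by omega) (by omega)
    rw [show i + j - p - 1 = i - p - 1 + j from by omega,
        show i + j - 1 = i - 1 + j from by omega] at h
    exact h
  · intro q hq1 hqd hocc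
    obtain ⟨-, -, heq⟩ := hocc
    rw [hlen2] at heq
    exact hkey q hq1 hqd heq
  · intro m' hm hm' a ha1 ha2 hocc
    obtain ⟨-, -, heq⟩ := hocc
    have hlen3 : ((S.drop (i - 1)).take (m' - i + 1)).length = m' - i + 1 := by
      simp only [List.length_take, List.length_drop]; omega
    rw [hlen3] at heq
    have hpt := hext' _ _ _ heq
    set q := i - a with hqdef
    have hq1 : 1 ≤ q := by omega
    have hqd : q ≤ d := by omega
    apply hkey q hq1 hqd
    apply hext
    intro j hj
    have h := hpt j (by omega)
    rw [show a - 1 + j = i - q - 1 + j from by omega] at h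
    exact h
end

section
/- Let S be a nonempty string and let b = lrs(S). Let i be the second rightmost starting position of an occurrence of b in S, under the convention that the empty string occurs starting at every position 1, …, |S|+1 (so the rightmost occurrence of b starts at position |S| − |b| + 1, and i < |S| − |b| + 1; such i exists). Then the longest closed suffix of S equals S[i..|S|], and b is the longest border of S[i..|S|]. -/
open List

variable {α : Type*}

/-!
Write `b = lrs S` and `T = S[i..|S|]`. Since `b` occurs at `i` and is a suffix of `S`, it is a
border of `T`; a longer border of `T` would occur at `i` and end before `|S|`, i.e. be a longer
repeating suffix of `S`. An occurrence of `b` in `T` other than the prefix one starts to the right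
of `i` in `S`, so by the choice of `i` it is the rightmost one: `T` is closed. A longer suffix `t`
of `S` starts before `i`, and each border of `t` is a repeating suffix of `S`, hence a suffix of
`b`; it therefore also occurs inside the copy of `b` at `i`, strictly inside `t`, so `t` is not
closed.
-/

section Occurrences

variable {S T w v : List α} {a : ℕ}

theorem occ_iff : Occ S w a ↔ 1 ≤ a ∧ a ≤ S.length + 1 ∧ w <+: S.drop (a - 1) := by
  rw [prefix_iff_eq_take]
  refine ⟨fun ⟨ha, hle, h⟩ => ⟨ha, by omega, h.symm⟩, fun ⟨ha, hle, h⟩ => ⟨ha, ?_, h.symm⟩⟩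
  have := congrArg length h
  simp only [length_take, length_drop] at this
  omega

theorem Occ.add_length_le (h : Occ S w a) : a + w.length ≤ S.length + 1 := h.2.1

theorem occ_drop_iff {d : ℕ} (ha : 1 ≤ a) (hd : d ≤ S.length) :
    Occ (S.drop d) w a ↔ Occ S w (a + d) := by
  rw [occ_iff, occ_iff, drop_drop, length_drop, show d + (a - 1) = a + d - 1 by omega]
  exact and_congr (iff_of_true ha (by omega)) (and_congr_left fun _ => by omega)

theorem exists_occ_of_infix (h : w <:+: S) : ∃ a, Occ S w a := by
  obtain ⟨u, v, rfl⟩ := h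
  refine ⟨u.length + 1, occ_iff.2 ⟨by omega, ?_, ?_⟩⟩ <;> simp [append_assoc]

theorem Occ.of_isPrefix (h : Occ T w a) (hT : T <+: S) : Occ S w a := by
  rw [occ_iff] at h ⊢
  have := hT.length_le
  exact ⟨h.1, by omega, h.2.2.trans (hT.drop _)⟩

theorem Occ.of_isSuffix (h : Occ S w a) (hv : v <:+ w) :
    Occ S v (a + (w.length - v.length)) := by
  have hend := h.add_length_le
  rw [occ_iff] at h ⊢
  refine ⟨by omega, by omega, ?_⟩
  rw [show a + (w.length - v.length) - 1 = a - 1 + (w.length - v.length) by omega, ← drop_drop]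
  nth_rw 1 [suffix_iff_eq_drop.1 hv]
  exact h.2.2.drop _

theorem infix_dropLast_of_occ (h : Occ S w a) (hend : a + w.length ≤ S.length) :
    w <:+: S.dropLast := by
  obtain ⟨ha, -, r, hr⟩ := occ_iff.1 h
  have hr_ne : r ≠ [] := by
    rintro rfl
    have := congrArg length hr
    simp only [append_nil, length_drop] at this
    omega
  refine ⟨S.take (a - 1), r.dropLast, ?_⟩
  rw [append_assoc, ← dropLast_append_of_ne_nil hr_ne, hr, ← dropLast_append_of_ne_nil,
    take_append_drop]
  intro hd
  simp only [drop_eq_nil_iff] at hd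
  omega

end Occurrences

section RepeatingSuffix

variable {S t w : List α}

theorem RepSuffix.of_occ {a : ℕ} (hw : w <:+ S) (h : Occ S w a)
    (hend : a + w.length ≤ S.length) : RepSuffix S w :=
  ⟨hw, infix_dropLast_of_occ h hend⟩

theorem RepSuffix.of_isBorder (hw : IsBorder t w) (ht : t <:+ S) : RepSuffix S w := by
  have hocc : Occ S w (S.length - t.length + 1) := by
    rw [occ_iff, Nat.add_sub_cancel, ← suffix_iff_eq_drop.1 ht]
    exact ⟨le_add_self, by omega, hw.1⟩
  have := hw.2.2
  have := ht.length_le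
  exact .of_occ (hw.2.1.trans ht) hocc (by omega)

variable [DecidableEq α]

theorem repSuffix_lrs (S : List α) : RepSuffix S (lrs S) :=
  ⟨drop_suffix _ _, Nat.findGreatest_spec (P := fun l => S.drop (S.length - l) <:+: S.dropLast)
    (Nat.zero_le _) (by simp)⟩

theorem RepSuffix.length_le_lrs (hw : RepSuffix S w) : w.length ≤ (lrs S).length := by
  have hle : lrsLen S ≤ S.length := Nat.findGreatest_le _
  have : w.length ≤ lrsLen S := by
    refine Nat.le_findGreatest hw.1.length_le ?_
    rw [← suffix_iff_eq_drop.1 hw.1]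
    exact hw.2
  rw [lrs, length_drop]
  omega

theorem RepSuffix.isSuffix_lrs (hw : RepSuffix S w) : w <:+ lrs S :=
  suffix_of_suffix_length_le hw.1 (repSuffix_lrs S).1 hw.length_le_lrs

theorem exists_occ_lrs_of_ne_nil (hS : S ≠ []) :
    ∃ j, Occ S (lrs S) j ∧ j + (lrs S).length ≤ S.length := by
  obtain ⟨j, hj⟩ := exists_occ_of_infix (repSuffix_lrs S).2
  have := hj.add_length_le
  rw [length_dropLast] at this
  have := length_pos_iff.2 hS
  exact ⟨j, hj.of_isPrefix (dropLast_prefix S), by omega⟩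

end RepeatingSuffix

section SecondRightmostOccurrence

variable [DecidableEq α] {S : List α} {i : ℕ}

theorem isLongestBorder_drop_of_occ_lrs (hi : Occ S (lrs S) i)
    (hend : i + (lrs S).length ≤ S.length) : IsLongestBorder (S.drop (i - 1)) (lrs S) := by
  have hlen : (S.drop (i - 1)).length = S.length - (i - 1) := length_drop
  have := hi.1
  refine ⟨⟨(occ_iff.1 hi).2.2, ?_, by omega⟩, fun b hb => (RepSuffix.of_isBorder hb
    (drop_suffix _ _)).length_le_lrs⟩
  exact suffix_of_suffix_length_le (repSuffix_lrs S).1 (drop_suffix _ _) (by omega)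

theorem closedWord_drop_of_occ_lrs (hi : Occ S (lrs S) i) (hend : i + (lrs S).length ≤ S.length)
    (hmax : ∀ a, Occ S (lrs S) a → a + (lrs S).length ≤ S.length → a ≤ i) :
    ClosedWord (S.drop (i - 1)) := by
  refine .inr ⟨lrs S, isLongestBorder_drop_of_occ_lrs hi hend, fun a ha => ?_⟩
  have := hi.1
  have := ha.1
  have haS := (occ_drop_iff ha.1 (by omega)).1 ha
  have := haS.add_length_le
  rw [length_drop]
  by_contra hne
  have := hmax _ haS (by omega)
  omega

theorem length_le_of_closedWord_of_occ_lrs (hi : Occ S (lrs S) i)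
    (hend : i + (lrs S).length ≤ S.length) {t : List α} (ht : ClosedWord t) (hts : t <:+ S) :
    t.length ≤ (S.drop (i - 1)).length := by
  have := hi.1
  have := hts.length_le
  rw [length_drop]
  by_contra! hlong
  obtain hshort | ⟨b, ⟨hb, -⟩, hocc⟩ := ht
  · omega
  have hbl := (RepSuffix.of_isBorder hb hts).isSuffix_lrs
  have hbS : Occ S b (i + ((lrs S).length - b.length)) := hi.of_isSuffix hbl
  have := hbl.length_le
  obtain ⟨p, hp⟩ : ∃ p, p + (S.length - t.length) = i + ((lrs S).length - b.length) :=
    ⟨_, Nat.sub_add_cancel (by omega)⟩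
  have hbt : Occ (S.drop (S.length - t.length)) b p :=
    (occ_drop_iff (by omega) (by omega)).2 (by rw [hp]; exact hbS)
  rw [← suffix_iff_eq_drop.1 hts] at hbt
  rcases hocc _ hbt with h | h <;> omega

end SecondRightmostOccurrence

/-- For nonempty `S` with `b = lrs S` (under the convention that the empty
string occurs at every position `1, …, |S|+1`), an occurrence position of `b` strictly below
the rightmost one `|S| - |b| + 1` exists, and if `i` is the largest such (the second rightmost
occurrence), then the longest closed suffix of `S` equals `S[i..|S|]` and `b` is the longest
border of `S[i..|S|]`. -/
theorem longest_closed_suffix_via_lrs [DecidableEq α] (S : List α) (hS : S ≠ []) :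
    (∃ j, Occ S (lrs S) j ∧ j < S.length - (lrs S).length + 1) ∧
    (∀ i, Occ S (lrs S) i → i < S.length - (lrs S).length + 1 →
      (∀ a, Occ S (lrs S) a → a < S.length - (lrs S).length + 1 → a ≤ i) →
      (ClosedWord (S.drop (i - 1)) ∧ S.drop (i - 1) <:+ S ∧
        (∀ t, ClosedWord t → t <:+ S → t.length ≤ (S.drop (i - 1)).length)) ∧
      IsLongestBorder (S.drop (i - 1)) (lrs S)) := by
  have hlrs : (lrs S).length ≤ S.length := (repSuffix_lrs S).1.length_le
  refine ⟨?_, fun i hi hlt hmax => ?_⟩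
  · obtain ⟨j, hj, hjend⟩ := exists_occ_lrs_of_ne_nil hS
    exact ⟨j, hj, by omega⟩
  have hend : i + (lrs S).length ≤ S.length := by omega
  have hmax_end : ∀ a, Occ S (lrs S) a → a + (lrs S).length ≤ S.length → a ≤ i :=
    fun a ha haend => hmax a ha (by omega)
  exact ⟨⟨closedWord_drop_of_occ_lrs hi hend hmax_end, drop_suffix _ _,
    fun t ht hts => length_le_of_closedWord_of_occ_lrs hi hend ht hts⟩,
    isLongestBorder_drop_of_occ_lrs hi hend⟩
end

section
/- For a string S of length n ≥ 1, the number of distinct (possibly empty) substrings w of S for which there exist two distinct characters a ≠ b such that both w·a and w·b are substrings of S is at most n − 1. -/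
open List

variable {α : Type*}

lemma my_lt_of_prefix_lt [LinearOrder α] {p x z : List α} {a b : α} (hab : a < b)
    (hx : p ++ [a] <+: x) (hz : p ++ [b] <+: z) : x < z := by
  obtain ⟨x', rfl⟩ := hx
  obtain ⟨z', rfl⟩ := hz
  show List.Lex (· < ·) _ _
  simp only [append_assoc, singleton_append]
  exact List.Lex.append_left _ (List.Lex.rel hab) p

lemma my_prefix_convex [LinearOrder α] {p : List α} : ∀ {x y z : List α}, p <+: x → p <+: z →
    x ≤ y → y ≤ z → p <+: y := by
  induction p with
  | nil => intro x y z _ _ _ _; exact nil_prefix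
  | cons c p ih =>
    intro x y z hx hz hxy hyz
    cases x with
    | nil => simp at hx
    | cons cx x₂ =>
      rw [cons_prefix_cons] at hx
      obtain ⟨rfl, hx⟩ := hx
      cases z with
      | nil => simp at hz
      | cons cz z₂ =>
        rw [cons_prefix_cons] at hz
        obtain ⟨rfl, hz⟩ := hz
        cases y with
        | nil =>
          exact absurd (lt_of_lt_of_le (show ([] : List α) < c :: x₂ from List.Lex.nil) hxy)
            (lt_irrefl _)
        | cons d y₂ =>
          have hcd : c = d := by
            rcases lt_trichotomy c d with h | h | h
            · exact absurd (show (c :: z₂ : List α) < d :: y₂ from List.Lex.rel h)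
                (not_lt.mpr hyz)
            · exact h
            · exact absurd (show (d :: y₂ : List α) < c :: x₂ from List.Lex.rel h)
                (not_lt.mpr hxy)
          subst hcd
          have h1 : x₂ ≤ y₂ := le_of_not_gt fun h =>
            (not_lt.mpr hxy) (show (c :: y₂ : List α) < c :: x₂ from List.Lex.cons h)
          have h2 : y₂ ≤ z₂ := le_of_not_gt fun h =>
            (not_lt.mpr hyz) (show (c :: z₂ : List α) < c :: y₂ from List.Lex.cons h)
          rw [cons_prefix_cons]
          exact ⟨rfl, ih hx hz h1 h2⟩

/-- For a string `S` of length `n ≥ 1`, the number of distinct (possibly empty)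
substrings `w` of `S` admitting two distinct right extensions `w·a`, `w·b` (with `a ≠ b`)
that are substrings of `S` is at most `n - 1`. -/
theorem right_branching_substrings_card (S : List α) (hS : 1 ≤ S.length) :
    {w : List α | ∃ a b : α, a ≠ b ∧ (w ++ [a]) <:+: S ∧ (w ++ [b]) <:+: S}.Finite ∧
    {w : List α | ∃ a b : α, a ≠ b ∧ (w ++ [a]) <:+: S ∧ (w ++ [b]) <:+: S}.ncard
      ≤ S.length - 1 := by
  classical
  obtain ⟨_inst, -⟩ := exists_wellOrder α
  set n := S.length with hn
  set B := {w : List α | ∃ a b : α, a ≠ b ∧ (w ++ [a]) <:+: S ∧ (w ++ [b]) <:+: S} with hB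
  have hinj : Set.InjOn (fun i => S.drop i) (Finset.range n) := by
    intro i hi j hj hij
    simp only [Finset.coe_range, Set.mem_Iio] at hi hj
    have := congrArg List.length hij
    simp only [length_drop] at this
    omega
  set T : Finset (List α) := (Finset.range n).image (fun i => S.drop i) with hT
  have hcard : T.card = n := by
    rw [hT, Finset.card_image_of_injOn hinj, Finset.card_range]
  set e := T.orderIsoOfFin hcard with he
  set E : ℕ → List α := fun m => if h : m < n then (e ⟨m, h⟩ : List α) else [] with hE
  have hmem : ∀ u : List α, u ≠ [] → u <:+: S → ∃ k, k < n ∧ u <+: E k := by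
    intro u hu hus
    obtain ⟨t, htp, hts⟩ := infix_iff_prefix_suffix.mp hus
    have hul : 1 ≤ u.length := List.length_pos_iff.mpr hu
    have htl : 1 ≤ t.length := le_trans hul htp.length_le
    have htn : t.length ≤ n := hts.length_le
    have htd : S.drop (n - t.length) = t := by
      obtain ⟨v, hv⟩ := hts
      have hl : n - t.length = v.length := by rw [hn, ← hv]; simp
      rw [hl, ← hv, List.drop_left]
    have htT : t ∈ T := by
      rw [hT]
      exact Finset.mem_image.mpr ⟨n - t.length, Finset.mem_range.mpr (by omega), htd⟩
    refine ⟨(e.symm ⟨t, htT⟩ : Fin n).1, (e.symm ⟨t, htT⟩ : Fin n).2, ?_⟩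
    rw [hE]
    simp only [dif_pos (e.symm ⟨t, htT⟩ : Fin n).2]
    rw [show (⟨(e.symm ⟨t, htT⟩ : Fin n).1, _⟩ : Fin n) = e.symm ⟨t, htT⟩ from rfl,
      OrderIso.apply_symm_apply]
    exact htp
  have Emono : ∀ {m m' : ℕ}, m < n → m' < n → m ≤ m' → E m ≤ E m' := by
    intro m m' h1 h2 hle
    rw [hE]
    simp only [dif_pos h1, dif_pos h2]
    exact Subtype.coe_le_coe.mpr (e.le_iff_le.mpr hle)
  -- key property
  set Q : ℕ → List α → Prop := fun k w =>
    w <+: E k ∧ w <+: E (k + 1) ∧ ∃ c, (w ++ [c]) <+: E k ∧ ¬ (w ++ [c]) <+: E (k + 1)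
    with hQ
  have key : ∀ w ∈ B, ∃ k, k < n - 1 ∧ Q k w := by
    have main : ∀ (w : List α) (a b : α), a < b → (w ++ [a]) <:+: S → (w ++ [b]) <:+: S →
        ∃ k, k < n - 1 ∧ Q k w := by
      intro w a b hab ha hb
      obtain ⟨i, hi, hia⟩ := hmem _ (by simp) ha
      obtain ⟨j, hj, hjb⟩ := hmem _ (by simp) hb
      set K := (Finset.range n).filter (fun m => (w ++ [a]) <+: E m) with hK
      have hiK : i ∈ K := by
        rw [hK, Finset.mem_filter, Finset.mem_range]; exact ⟨hi, hia⟩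
      set k := K.max' ⟨i, hiK⟩ with hk
      have hkK : k ∈ K := K.max'_mem _
      rw [hK, Finset.mem_filter, Finset.mem_range] at hkK
      obtain ⟨hkn, hka⟩ := hkK
      have hmj : ∀ m ∈ K, m < j := by
        intro m hm
        rw [hK, Finset.mem_filter, Finset.mem_range] at hm
        have : E m < E j := my_lt_of_prefix_lt hab hm.2 hjb
        by_contra hc
        exact absurd (Emono hj hm.1 (not_lt.mp hc)) (not_le.mpr this)
      have hkj : k < j := hmj k (K.max'_mem _)
      have hk1n : k + 1 < n := by omega
      have hwk : w <+: E k := (prefix_append w [a]).trans hka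
      have hwj : w <+: E j := (prefix_append w [b]).trans hjb
      have hwk1 : w <+: E (k + 1) :=
        my_prefix_convex hwk hwj (Emono hkn hk1n (by omega)) (Emono hk1n hj (by omega))
      have hnot : ¬ (w ++ [a]) <+: E (k + 1) := by
        intro hcon
        have : k + 1 ∈ K := by
          rw [hK, Finset.mem_filter, Finset.mem_range]; exact ⟨hk1n, hcon⟩
        have := K.le_max' _ this
        omega
      exact ⟨k, by omega, hwk, hwk1, a, hka, hnot⟩
    intro w hw
    obtain ⟨a, b, hab, ha, hb⟩ := hw
    rcases hab.lt_or_gt with h | h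
    · exact main w a b h ha hb
    · exact main w b a h hb ha
  have uniq : ∀ (k : ℕ) (w w' : List α), Q k w → Q k w' → w = w' := by
    have half : ∀ (k : ℕ) (w w' : List α), Q k w → Q k w' → w.length ≤ w'.length → w = w' := by
      intro k w w' hw hw' hlen
      obtain ⟨hw1, hw2, c, hwc, hwnc⟩ := hw
      obtain ⟨hw'1, hw'2, -⟩ := hw'
      have hpre : w <+: w' := prefix_of_prefix_length_le hw1 hw'1 hlen
      by_cases hl : w.length = w'.length
      · exact hpre.eq_of_length hl
      · exfalso
        have : (w ++ [c]) <+: w' := by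
          refine prefix_of_prefix_length_le hwc hw'1 ?_
          simp only [length_append, length_singleton]
          omega
        exact hwnc (this.trans hw'2)
    intro k w w' hw hw'
    rcases le_total w.length w'.length with h | h
    · exact half k w w' hw hw' h
    · exact (half k w' w hw' hw h).symm
  have hex : ∀ w : B, ∃ k : Fin (n - 1), Q k.1 w.1 := by
    rintro ⟨w, hw⟩
    obtain ⟨k, hk, hQk⟩ := key w hw
    exact ⟨⟨k, hk⟩, hQk⟩
  choose f hf using hex
  have hfinj : Function.Injective f := by
    intro w w' h
    exact Subtype.ext (uniq (f w).1 w.1 w'.1 (hf w) (h ▸ hf w'))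
  have hfin : Finite B := Finite.of_injective f hfinj
  refine ⟨Set.finite_coe_iff.mp hfin, ?_⟩
  calc B.ncard = Nat.card B := (Nat.card_coe_set_eq _).symm
    _ ≤ Nat.card (Fin (n - 1)) := Nat.card_le_card_of_injective f hfinj
    _ = n - 1 := by simp
end
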